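/- arXiv:2311.15744 — 2 statements merged into one kernel-verified Lean document; each statement's English description precedes it below -/
import Mathlib

section
/- For any c > 0, the fraction of the volume of the unit hemisphere in ℝ^d above the hyperplane x_1 = c/√(d−1) is less than (2/c)·e^{−c²/2}. -/
/-!
Slicing the ball perpendicular to the first axis writes the volume of the cap `t ≤ x₀` as
`|Bⁿ| · ∫ₜ^∞ (1 - s²)^{n/2} ds` with `n = d - 1`. Since `1 - s² ≤ e^{-s²}`, the cap integral is
at most the Gaussian tail `∫ₜ^∞ e^{-ns²/2} ds ≤ e^{-nt²/2}/(nt)`, while Bernoulli's inequality bounds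
the hemisphere integral below by `∫₀^h (1 - ns²) ds = 5h/6` with `h = 1/√(2n)`. At `t = c/√n` the
ratio is therefore at most `(6√2/5) · e^{-c²/2}/c`, and `6√2/5 < 2`.
-/
open MeasureTheory Set Filter

theorem EuclideanSpace.norm_le_one_iff {ι : Type*} [Fintype ι] (x : EuclideanSpace ℝ ι) :
    ‖x‖ ≤ 1 ↔ ∑ i, x i ^ 2 ≤ 1 := by
  rw [← sq_le_one_iff₀ (norm_nonneg x), EuclideanSpace.real_norm_sq_eq]

theorem volume_setOf_sum_sq_le {n : ℕ} (hn : n ≠ 0) (r : ℝ) :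
    volume {y : Fin n → ℝ | ∑ i, y i ^ 2 ≤ r}
      = ENNReal.ofReal (√r ^ n) * volume (Metric.ball (0 : EuclideanSpace ℝ (Fin n)) 1) := by
  rcases lt_or_ge r 0 with hr | hr
  · have hempty : {y : Fin n → ℝ | ∑ i, y i ^ 2 ≤ r} = ∅ :=
      eq_empty_of_forall_notMem fun y hy ↦ (hr.trans_le (by positivity)).not_ge hy
    rw [hempty, Real.sqrt_eq_zero_of_nonpos hr.le, zero_pow hn]
    simp
  · have hball : {y : Fin n → ℝ | ∑ i, y i ^ 2 ≤ r}
        = WithLp.toLp 2 ⁻¹' Metric.closedBall (0 : EuclideanSpace ℝ (Fin n)) √r := by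
      ext y
      simp [EuclideanSpace.norm_eq, Real.sqrt_le_sqrt_iff hr]
    rw [hball, (PiLp.volume_preserving_toLp (Fin n)).measure_preimage
        measurableSet_closedBall.nullMeasurableSet,
      Measure.addHaar_closedBall _ _ (Real.sqrt_nonneg r), finrank_euclideanSpace_fin]

theorem measurePreserving_euclideanSpace_head_tail (n : ℕ) :
    MeasurePreserving (fun x : EuclideanSpace ℝ (Fin (n + 1)) ↦ (x 0, fun i : Fin n ↦ x i.succ))
      volume volume :=
  (volume_preserving_piFinSuccAbove (fun _ : Fin (n + 1) ↦ ℝ) 0).comp (PiLp.volume_preserving_ofLp _)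

theorem volume_ball_cap_eq_lintegral {n : ℕ} (hn : n ≠ 0) (t : ℝ) :
    volume {x : EuclideanSpace ℝ (Fin (n + 1)) | ‖x‖ ≤ 1 ∧ t ≤ x 0}
      = volume (Metric.ball (0 : EuclideanSpace ℝ (Fin n)) 1) *
        ∫⁻ s in Ici t, ENNReal.ofReal (√(1 - s ^ 2) ^ n) := by
  set T : Set (ℝ × (Fin n → ℝ)) := {p | t ≤ p.1 ∧ p.1 ^ 2 + ∑ i, p.2 i ^ 2 ≤ 1}
  have hT : MeasurableSet T :=
    (measurableSet_le measurable_const measurable_fst).inter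
      (measurableSet_le (f := fun p : ℝ × (Fin n → ℝ) ↦ p.1 ^ 2 + ∑ i, p.2 i ^ 2) (by fun_prop)
        measurable_const)
  have hcap : {x : EuclideanSpace ℝ (Fin (n + 1)) | ‖x‖ ≤ 1 ∧ t ≤ x 0}
      = (fun x : EuclideanSpace ℝ (Fin (n + 1)) ↦ (x 0, fun i : Fin n ↦ x i.succ)) ⁻¹' T := by
    ext x
    simp only [mem_ofPred_eq, mem_preimage, T, EuclideanSpace.norm_le_one_iff, Fin.sum_univ_succ]
    exact and_comm
  have hslice (s : ℝ) : Prod.mk s ⁻¹' T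
      = if t ≤ s then {y : Fin n → ℝ | ∑ i, y i ^ 2 ≤ 1 - s ^ 2} else ∅ := by
    split_ifs with hs
    · ext y; simp [T, hs, le_sub_iff_add_le']
    · ext y; simp [T, hs]
  rw [hcap, (measurePreserving_euclideanSpace_head_tail n).measure_preimage hT.nullMeasurableSet,
    Measure.volume_eq_prod, Measure.prod_apply hT, ← lintegral_indicator measurableSet_Ici,
    ← lintegral_const_mul' _ _ measure_ball_lt_top.ne]
  congr 1 with s
  rw [hslice]
  split_ifs with hs
  · simp [indicator_of_mem (mem_Ici.2 hs), volume_setOf_sum_sq_le hn, mul_comm]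
  · simp [indicator_of_notMem (mt mem_Ici.1 hs)]

theorem sqrt_one_sub_sq_pow_le_exp (n : ℕ) (s : ℝ) :
    √(1 - s ^ 2) ^ n ≤ Real.exp (-n * s ^ 2 / 2) := by
  have hsqrt : √(1 - s ^ 2) ≤ √(Real.exp (-s ^ 2)) := by
    gcongr
    linarith [Real.add_one_le_exp (-s ^ 2)]
  calc √(1 - s ^ 2) ^ n ≤ √(Real.exp (-s ^ 2)) ^ n := by gcongr
    _ = Real.exp (-n * s ^ 2 / 2) := by
      rw [Real.sqrt_eq_rpow, ← Real.exp_mul, ← Real.exp_nat_mul]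
      ring_nf

theorem one_sub_mul_sq_le_sqrt_one_sub_sq_pow (n : ℕ) {s : ℝ} (hs : s ^ 2 ≤ 1) :
    1 - n * s ^ 2 ≤ √(1 - s ^ 2) ^ n := by
  have h0 : 0 ≤ 1 - s ^ 2 := sub_nonneg.2 hs
  calc 1 - n * s ^ 2 = 1 + n * (-s ^ 2) := by ring
    _ ≤ (1 + -s ^ 2) ^ n := one_add_mul_le_pow (by linarith [sq_nonneg s]) n
    _ = (1 - s ^ 2) ^ n := by ring
    _ ≤ √(1 - s ^ 2) ^ n := by
      gcongr
      exact Real.le_sqrt_of_sq_le (by nlinarith)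

theorem lintegral_Ioi_exp_neg_mul_sq_div_two_le {a t : ℝ} (ha : 0 < a) (ht : 0 < t) :
    ∫⁻ s in Ioi t, ENNReal.ofReal (Real.exp (-a * s ^ 2 / 2))
      ≤ ENNReal.ofReal (Real.exp (-a * t ^ 2 / 2) / (a * t)) := by
  -- On `s > t` the Gaussian is at most `f s`, which has the explicit antiderivative `F`.
  set F : ℝ → ℝ := fun s ↦ -Real.exp (-a * s ^ 2 / 2) / (a * t)
  set f : ℝ → ℝ := fun s ↦ s / t * Real.exp (-a * s ^ 2 / 2)
  have hderiv (s : ℝ) : HasDerivAt F (f s) s :=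
    ((((hasDerivAt_pow 2 s).const_mul (-a)).div_const 2).exp.neg.div_const (a * t)).congr_deriv
      (by simp only [f]; field_simp; ring)
  have hcont : ContinuousWithinAt F (Ici t) t := (hderiv t).continuousAt.continuousWithinAt
  have hlim : Tendsto F atTop (nhds 0) := by
    have : Tendsto (fun s : ℝ ↦ -a * s ^ 2 / 2) atTop atBot :=
      ((tendsto_pow_atTop two_ne_zero).const_mul_atTop_of_neg (neg_lt_zero.2 ha)).atBot_div_const
        two_pos
    simpa [F] using (Real.tendsto_exp_atBot.comp this).neg.div_const (a * t)
  have hf_nonneg (s : ℝ) (hs : s ∈ Ioi t) : 0 ≤ f s := by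
    have : 0 < s := ht.trans hs
    positivity
  have hf_int : IntegrableOn f (Ioi t) :=
    integrableOn_Ioi_deriv_of_nonneg hcont (fun s _ ↦ hderiv s) hf_nonneg hlim
  calc ∫⁻ s in Ioi t, ENNReal.ofReal (Real.exp (-a * s ^ 2 / 2))
      ≤ ∫⁻ s in Ioi t, ENNReal.ofReal (f s) := by
        refine setLIntegral_mono (by fun_prop) fun s hs ↦ ENNReal.ofReal_le_ofReal ?_
        exact le_mul_of_one_le_left (Real.exp_nonneg _) ((one_le_div ht).2 (le_of_lt hs))
    _ = ENNReal.ofReal (∫ s in Ioi t, f s) :=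
        (ofReal_integral_eq_lintegral_ofReal hf_int
          ((ae_restrict_mem measurableSet_Ioi).mono hf_nonneg)).symm
    _ = ENNReal.ofReal (Real.exp (-a * t ^ 2 / 2) / (a * t)) := by
        rw [integral_Ioi_of_hasDerivAt_of_tendsto hcont (fun s _ ↦ hderiv s) hf_int hlim]
        simp [F, neg_div]

theorem lintegral_Ici_sqrt_one_sub_sq_pow_le {n : ℕ} (hn : n ≠ 0) {t : ℝ} (ht : 0 < t) :
    ∫⁻ s in Ici t, ENNReal.ofReal (√(1 - s ^ 2) ^ n)
      ≤ ENNReal.ofReal (Real.exp (-n * t ^ 2 / 2) / (n * t)) :=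
  calc ∫⁻ s in Ici t, ENNReal.ofReal (√(1 - s ^ 2) ^ n)
      = ∫⁻ s in Ioi t, ENNReal.ofReal (√(1 - s ^ 2) ^ n) := by
        rw [Measure.restrict_congr_set Ioi_ae_eq_Ici]
    _ ≤ ∫⁻ s in Ioi t, ENNReal.ofReal (Real.exp (-n * s ^ 2 / 2)) :=
        lintegral_mono fun s ↦ ENNReal.ofReal_le_ofReal (sqrt_one_sub_sq_pow_le_exp n s)
    _ ≤ _ := lintegral_Ioi_exp_neg_mul_sq_div_two_le (by positivity) ht

theorem ofReal_le_lintegral_Ici_zero_sqrt_one_sub_sq_pow {n : ℕ} (hn : n ≠ 0) :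
    ENNReal.ofReal (5 / 6 / √(2 * n))
      ≤ ∫⁻ s in Ici (0 : ℝ), ENNReal.ofReal (√(1 - s ^ 2) ^ n) := by
  set h : ℝ := 1 / √(2 * n)
  have hh : 0 < h := by positivity
  have hh_sq : n * h ^ 2 = 1 / 2 := by
    rw [div_pow, Real.sq_sqrt (by positivity)]
    field_simp
  have hparab_nonneg (s : ℝ) (hs : s ∈ Icc 0 h) : 0 ≤ 1 - n * s ^ 2 := by
    have : n * s ^ 2 ≤ n * h ^ 2 := by gcongr; exact hs.1; exact hs.2
    linarith
  have hparab_int : ∫ s in Icc 0 h, (1 - n * s ^ 2) = 5 / 6 / √(2 * n) := by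
    rw [integral_Icc_eq_integral_Ioc, ← intervalIntegral.integral_of_le hh.le,
      intervalIntegral.integral_sub intervalIntegrable_const
        ((intervalIntegral.intervalIntegrable_pow 2).const_mul _),
      intervalIntegral.integral_const_mul, integral_pow]
    have hh_cube : n * h ^ 3 = h / 2 := by rw [pow_succ, ← mul_assoc, hh_sq]; ring
    have hh_def : 5 / 6 / √(2 * n) = 5 / 6 * h := by ring
    simp only [intervalIntegral.integral_const, smul_eq_mul, mul_one, sub_zero, hh_def]
    linear_combination (-1 / 3 : ℝ) * hh_cube
  calc ENNReal.ofReal (5 / 6 / √(2 * n))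
      = ∫⁻ s in Icc 0 h, ENNReal.ofReal (1 - n * s ^ 2) := by
        rw [← hparab_int]
        exact ofReal_integral_eq_lintegral_ofReal (by fun_prop : Continuous _).integrableOn_Icc
          ((ae_restrict_mem measurableSet_Icc).mono hparab_nonneg)
    _ ≤ ∫⁻ s in Icc 0 h, ENNReal.ofReal (√(1 - s ^ 2) ^ n) := by
        refine setLIntegral_mono (by fun_prop) fun s hs ↦ ENNReal.ofReal_le_ofReal ?_
        have hn1 : (1 : ℝ) ≤ n := by exact_mod_cast Nat.one_le_iff_ne_zero.2 hn
        have := hparab_nonneg s hs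
        exact one_sub_mul_sq_le_sqrt_one_sub_sq_pow n (by nlinarith [sq_nonneg s])
    _ ≤ _ := lintegral_mono_set Icc_subset_Ici_self

theorem volume_ball_cap_div_volume_hemisphere_le {n : ℕ} (hn : n ≠ 0) {t : ℝ} (ht : 0 < t) :
    (volume {x : EuclideanSpace ℝ (Fin (n + 1)) | ‖x‖ ≤ 1 ∧ t ≤ x 0}).toReal /
        (volume {x : EuclideanSpace ℝ (Fin (n + 1)) | ‖x‖ ≤ 1 ∧ 0 ≤ x 0}).toReal
      ≤ Real.exp (-n * t ^ 2 / 2) / (n * t) / (5 / 6 / √(2 * n)) := by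
  have hlower : 0 < 5 / 6 / √(2 * n) := by positivity
  rw [← ENNReal.toReal_div, volume_ball_cap_eq_lintegral hn, volume_ball_cap_eq_lintegral hn,
    ENNReal.mul_div_mul_left _ _ (Metric.measure_ball_pos _ _ one_pos).ne' measure_ball_lt_top.ne]
  calc _ ≤ (ENNReal.ofReal (Real.exp (-n * t ^ 2 / 2) / (n * t)) /
          ENNReal.ofReal (5 / 6 / √(2 * n))).toReal :=
        ENNReal.toReal_mono
          (ENNReal.div_ne_top ENNReal.ofReal_ne_top (ENNReal.ofReal_pos.2 hlower).ne')
          (ENNReal.div_le_div (lintegral_Ici_sqrt_one_sub_sq_pow_le hn ht)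
            (ofReal_le_lintegral_Ici_zero_sqrt_one_sub_sq_pow hn))
    _ = _ := by
        rw [← ENNReal.ofReal_div_of_pos hlower, ENNReal.toReal_ofReal (by positivity)]

/-- For any `c > 0`, the fraction of the volume of the unit hemisphere in
ℝ^d (d ≥ 2) above the hyperplane `x_1 = c/√(d−1)` is less than `(2/c)·e^{−c²/2}`. -/
theorem hemisphere_volume_above_slab (d : ℕ) (hd : 2 ≤ d) (c : ℝ) (hc : 0 < c) :
    (volume {x : EuclideanSpace ℝ (Fin d) | ‖x‖ ≤ 1 ∧
        c / Real.sqrt ((d : ℝ) - 1) ≤ x ⟨0, by omega⟩}).toReal /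
      (volume {x : EuclideanSpace ℝ (Fin d) | ‖x‖ ≤ 1 ∧ 0 ≤ x ⟨0, by omega⟩}).toReal
      < (2 / c) * Real.exp (-c ^ 2 / 2) := by
  obtain ⟨n, rfl⟩ : ∃ n, d = n + 1 := ⟨d - 1, by omega⟩
  have hn : n ≠ 0 := by omega
  simp only [Fin.mk_zero, Nat.cast_add, Nat.cast_one, add_sub_cancel_right]
  calc _ ≤ Real.exp (-n * (c / √n) ^ 2 / 2) / (n * (c / √n)) / (5 / 6 / √(2 * n)) :=
        volume_ball_cap_div_volume_hemisphere_le hn (by positivity)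
    _ = 6 * √2 / 5 / c * Real.exp (-c ^ 2 / 2) := by
        rw [Real.sqrt_mul zero_le_two, div_pow, Real.sq_sqrt n.cast_nonneg]
        field_simp
        exact Real.sq_sqrt n.cast_nonneg
    _ < 2 / c * Real.exp (-c ^ 2 / 2) := by
        gcongr
        nlinarith [Real.sq_sqrt (zero_le_two : (0 : ℝ) ≤ 2), Real.sqrt_nonneg 2]
end

section
/- For a d-dimensional spherical Gaussian with identity covariance, for any c > 0, all but at most (4/c²)·e^{−c²/4} of its probability mass lies in the annulus √(d−1) − c ≤ ‖x‖ ≤ √(d−1) + c. -/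
/-!
The squared norm of `x` is a χ² variable with `d` degrees of freedom, with moment generating
function `(1 - 2t)^(-d/2)`. The Chernoff bound at the optimal `t` bounds its tails at level `a` by
`exp (-I a)` with `I a = (a - d - d log (a / d)) / 2`. Bounding the logarithm by `y - 1` around a
tangent point `m` gives `2 I (q²) ≥ (q - m)² - (d - m²)² / m²`: with `m = √(d - 1)` the norm exceeds
`√(d - 1) + c` with probability at most `e^((1 - c²)/2)`, and with `m = √d` it falls below
`√d - c`, a fortiori below `√(d - 1) - c`, with probability at most `e^(-c²/2)`. Finally
`(1 + √e) e^(-c²/2) ≤ (4/c²) e^(-c²/4)`, since `y e^(-y) ≤ 1/e` and `1 + √e ≤ e`.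
-/

open MeasureTheory ProbabilityTheory Real

lemma integral_exp_mul_sq_gaussianReal {t : ℝ} (ht : t < 1 / 2) :
    ∫ x, exp (t * x ^ 2) ∂gaussianReal 0 1 = (1 - 2 * t) ^ (-(1 / 2 : ℝ)) := by
  have hdens (x : ℝ) : gaussianPDFReal 0 1 x • exp (t * x ^ 2)
      = (√(2 * π))⁻¹ * exp (-(1 / 2 - t) * x ^ 2) := by
    rw [gaussianPDFReal, smul_eq_mul, mul_assoc, ← exp_add]
    congr 2
    · simp
    · push_cast; ring
  have h2t : 0 < 1 - 2 * t := by linarith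
  simp_rw [integral_gaussianReal_eq_integral_smul one_ne_zero, hdens, integral_const_mul,
    integral_gaussian, show π / (1 / 2 - t) = 2 * π * (1 - 2 * t)⁻¹ by field_simp,
    sqrt_mul' _ (inv_nonneg.2 h2t.le), ← mul_assoc, sqrt_inv, sqrt_eq_rpow, rpow_neg h2t.le]
  rw [inv_mul_cancel₀ (by positivity), one_mul]

lemma integrable_exp_mul_sq_gaussianReal {t : ℝ} (ht : t < 1 / 2) :
    Integrable (fun x ↦ exp (t * x ^ 2)) (gaussianReal 0 1) :=
  .of_integral_ne_zero <| by
    rw [integral_exp_mul_sq_gaussianReal ht]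
    exact (rpow_pos_of_pos (by linarith) _).ne'

noncomputable def chiSqRate (n a : ℝ) : ℝ := (a - n - n * log (a / n)) / 2

lemma exp_neg_mul_mul_rpow_eq_exp_neg_chiSqRate {n a t : ℝ} (hn : 0 < n) (ha : 0 < a)
    (ht : 1 - 2 * t = n / a) :
    exp (-t * a) * (1 - 2 * t) ^ (-(n / 2)) = exp (-chiSqRate n a) := by
  have ht' : t = (1 - n / a) / 2 := by linarith
  rw [ht, rpow_def_of_pos (by positivity), ← exp_add, chiSqRate, ht',
    show n / a = (a / n)⁻¹ by rw [inv_div], log_inv]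
  congr 1
  field_simp
  ring

lemma sq_sub_sub_le_two_mul_chiSqRate {n m q : ℝ} (hn : 0 < n) (hm : 0 < m) (hq : 0 < q) :
    (q - m) ^ 2 - (n - m ^ 2) ^ 2 / m ^ 2 ≤ 2 * chiSqRate n (q ^ 2) := by
  have hsplit : log (q ^ 2 / n) = 2 * log (q * m / n) + log (n / m ^ 2) := by
    rw [show q ^ 2 / n = (q * m / n) ^ 2 * (n / m ^ 2) by field_simp,
      log_mul (by positivity) (by positivity), log_pow, Nat.cast_ofNat]
  have h₁ := log_le_sub_one_of_pos (show 0 < q * m / n by positivity)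
  have h₂ := log_le_sub_one_of_pos (show 0 < n / m ^ 2 by positivity)
  have hlog : n * log (q ^ 2 / n) ≤ 2 * q * m - 3 * n + n ^ 2 / m ^ 2 :=
    calc n * log (q ^ 2 / n) ≤ n * (2 * (q * m / n - 1) + (n / m ^ 2 - 1)) := by
          rw [hsplit]; gcongr
      _ = 2 * q * m - 3 * n + n ^ 2 / m ^ 2 := by field_simp; ring
  have hexpand : (n - m ^ 2) ^ 2 / m ^ 2 = n ^ 2 / m ^ 2 - 2 * n + m ^ 2 := by
    field_simp; ring
  rw [chiSqRate, hexpand]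
  linarith

lemma one_add_exp_half_mul_exp_le {c : ℝ} (hc : c ≠ 0) :
    (1 + exp (1 / 2)) * exp (-c ^ 2 / 2) ≤ 4 / c ^ 2 * exp (-c ^ 2 / 4) := by
  set y := c ^ 2 / 4 with hy
  have hy0 : 0 < y := by positivity
  have hexp_half : 13 / 8 ≤ exp (1 / 2) := by
    have := quadratic_le_exp_of_nonneg (x := 1 / 2) (by norm_num)
    linarith
  have hgolden : 1 + exp (1 / 2) ≤ exp (1 / 2) ^ 2 := by nlinarith
  have hye : y * exp (1 / 2) ^ 2 ≤ exp y :=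
    calc y * exp (1 / 2) ^ 2 = y * exp 1 := by rw [← exp_nat_mul]; norm_num
      _ ≤ exp (y - 1) * exp 1 := by gcongr; linarith [add_one_le_exp (y - 1)]
      _ = exp y := by rw [← exp_add]; ring_nf
  rw [show -c ^ 2 / 2 = -y + -y by rw [hy]; ring, show -c ^ 2 / 4 = -y by rw [hy]; ring,
    show 4 / c ^ 2 = y⁻¹ by rw [hy]; field_simp, exp_add, exp_neg]
  field_simp
  nlinarith [mul_le_mul_of_nonneg_right hgolden hy0.le]

section StandardGaussian

variable {ι : Type*} [Fintype ι]

lemma exp_mul_sum_sq (t : ℝ) (x : ι → ℝ) :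
    exp (t * ∑ i, x i ^ 2) = ∏ i, exp (t * x i ^ 2) := by
  rw [Finset.mul_sum, exp_sum]

lemma integrable_exp_mul_sum_sq_pi_gaussianReal {t : ℝ} (ht : t < 1 / 2) :
    Integrable (fun x : ι → ℝ ↦ exp (t * ∑ i, x i ^ 2))
      (Measure.pi fun _ ↦ gaussianReal 0 1) := by
  simpa only [exp_mul_sum_sq] using
    Integrable.fintype_prod fun _ ↦ integrable_exp_mul_sq_gaussianReal ht

lemma mgf_sum_sq_pi_gaussianReal {t : ℝ} (ht : t < 1 / 2) :
    mgf (fun x : ι → ℝ ↦ ∑ i, x i ^ 2) (Measure.pi fun _ ↦ gaussianReal 0 1) t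
      = (1 - 2 * t) ^ (-(Fintype.card ι / 2 : ℝ)) := by
  simp_rw [mgf, exp_mul_sum_sq]
  rw [integral_fintype_prod_eq_pow (fun y ↦ exp (t * y ^ 2)),
    integral_exp_mul_sq_gaussianReal ht, ← rpow_mul_natCast (by linarith)]
  ring_nf

lemma measureReal_sum_sq_ge_le_exp_neg_chiSqRate [Nonempty ι] {a : ℝ}
    (ha : Fintype.card ι ≤ a) :
    (Measure.pi fun _ : ι ↦ gaussianReal 0 1).real {x | a ≤ ∑ i, x i ^ 2}
      ≤ exp (-chiSqRate (Fintype.card ι) a) := by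
  set n : ℝ := (Fintype.card ι : ℝ)
  have hn : 0 < n := by simp only [n]; exact_mod_cast Fintype.card_pos
  have ha0 : 0 < a := hn.trans_le ha
  set t := (1 - n / a) / 2
  have h2t : 1 - 2 * t = n / a := by ring
  have ht0 : 0 ≤ t := by
    have : n / a ≤ 1 := (div_le_one ha0).2 ha
    linarith
  have ht : t < 1 / 2 := by
    have : 0 < n / a := by positivity
    linarith
  have h := measure_ge_le_exp_mul_mgf a ht0 (integrable_exp_mul_sum_sq_pi_gaussianReal (ι := ι) ht)
  rwa [mgf_sum_sq_pi_gaussianReal ht, exp_neg_mul_mul_rpow_eq_exp_neg_chiSqRate hn ha0 h2t] at h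

lemma measureReal_sum_sq_le_le_exp_neg_chiSqRate {a : ℝ} (ha0 : 0 < a)
    (ha : a ≤ Fintype.card ι) :
    (Measure.pi fun _ : ι ↦ gaussianReal 0 1).real {x | ∑ i, x i ^ 2 ≤ a}
      ≤ exp (-chiSqRate (Fintype.card ι) a) := by
  set n : ℝ := (Fintype.card ι : ℝ)
  have hn : 0 < n := ha0.trans_le ha
  set t := (1 - n / a) / 2
  have h2t : 1 - 2 * t = n / a := by ring
  have ht0 : t ≤ 0 := by
    have : 1 ≤ n / a := by rwa [le_div_iff₀ ha0, one_mul]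
    linarith
  have ht : t < 1 / 2 := by linarith
  have h := measure_le_le_exp_mul_mgf a ht0 (integrable_exp_mul_sum_sq_pi_gaussianReal (ι := ι) ht)
  rwa [mgf_sum_sq_pi_gaussianReal ht, exp_neg_mul_mul_rpow_eq_exp_neg_chiSqRate hn ha0 h2t] at h

lemma measureReal_sqrt_sum_sq_gt_le (hι : 1 < Fintype.card ι) {c : ℝ} (hc : 0 ≤ c) :
    (Measure.pi fun _ : ι ↦ gaussianReal 0 1).real
        {x | √(Fintype.card ι - 1) + c < √(∑ i, x i ^ 2)}
      ≤ exp ((1 / (Fintype.card ι - 1) - c ^ 2) / 2) := by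
  have : Nonempty ι := Fintype.card_pos_iff.1 (by omega)
  set n : ℝ := (Fintype.card ι : ℝ)
  set s := √(n - 1)
  have hn : 1 < n := by simp only [n]; exact_mod_cast hι
  have hs : 0 < s := sqrt_pos.2 (by linarith)
  have hs2 : s ^ 2 = n - 1 := sq_sqrt (by linarith)
  have hsub : {x : ι → ℝ | s + c < √(∑ i, x i ^ 2)} ⊆ {x | (s + c) ^ 2 ≤ ∑ i, x i ^ 2} :=
    fun x hx ↦ (le_sqrt (by positivity) (by positivity)).1 hx.le
  refine (measureReal_mono hsub).trans ?_
  rcases le_or_gt n ((s + c) ^ 2) with hnc | hnc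
  · refine (measureReal_sum_sq_ge_le_exp_neg_chiSqRate hnc).trans (exp_le_exp.2 ?_)
    have := sq_sub_sub_le_two_mul_chiSqRate (n := n) (by linarith) hs (by positivity : 0 < s + c)
    rw [add_sub_cancel_left, hs2, sub_sub_cancel, one_pow] at this
    linarith
  · -- here `2 c s < 1`, so the claimed bound is at least `1`
    refine measureReal_le_one.trans (one_le_exp ?_)
    have : c * s < 1 / 2 := by nlinarith
    have : c ^ 2 ≤ 1 / s ^ 2 := by
      rw [le_div_iff₀ (by positivity)]
      nlinarith [mul_nonneg hc hs.le]
    rw [← hs2]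
    linarith

lemma measureReal_sqrt_sum_sq_lt_le {c : ℝ} (hc : 0 ≤ c) :
    (Measure.pi fun _ : ι ↦ gaussianReal 0 1).real
        {x | √(∑ i, x i ^ 2) < √(Fintype.card ι) - c}
      ≤ exp (-c ^ 2 / 2) := by
  set ρ := √(Fintype.card ι : ℝ)
  rcases le_or_gt ρ c with hρc | hρc
  · convert measureReal_empty.trans_le (exp_pos _).le
    refine Set.eq_empty_of_forall_notMem fun x hx ↦ ?_
    exact (sqrt_nonneg _).not_gt (hx.trans_le (by linarith))
  have hρ : 0 < ρ := hc.trans_lt hρc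
  have hρ2 : ρ ^ 2 = Fintype.card ι := sq_sqrt (Nat.cast_nonneg _)
  have hsub : {x : ι → ℝ | √(∑ i, x i ^ 2) < ρ - c} ⊆ {x | ∑ i, x i ^ 2 ≤ (ρ - c) ^ 2} :=
    fun x hx ↦ (sqrt_le_left (by linarith)).1 hx.le
  refine (measureReal_mono hsub).trans ?_
  refine (measureReal_sum_sq_le_le_exp_neg_chiSqRate (by nlinarith) ?_).trans (exp_le_exp.2 ?_)
  · rw [← hρ2]
    nlinarith
  · have := sq_sub_sub_le_two_mul_chiSqRate (hρ2 ▸ sq_pos_of_pos hρ) hρ (by linarith : 0 < ρ - c)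
    rw [hρ2, sub_self, sub_sub_cancel_left, neg_sq, zero_pow two_ne_zero, zero_div,
      sub_zero] at this
    linarith

end StandardGaussian

/-- For a standard Gaussian in ℝ^d (d ≥ 2), for any `c > 0`, all but at
most `(4/c²)·e^{−c²/4}` of the probability mass lies in the annulus
`√(d−1) − c ≤ ‖x‖ ≤ √(d−1) + c`. -/
theorem gaussian_annulus (d : ℕ) (hd : 2 ≤ d) (c : ℝ) (hc : 0 < c) :
    (Measure.pi fun _ : Fin d => gaussianReal 0 1)
      {x : Fin d → ℝ | ¬ (Real.sqrt ((d : ℝ) - 1) - c ≤ Real.sqrt (∑ i, (x i) ^ 2) ∧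
          Real.sqrt (∑ i, (x i) ^ 2) ≤ Real.sqrt ((d : ℝ) - 1) + c)}
      ≤ ENNReal.ofReal ((4 / c ^ 2) * Real.exp (-c ^ 2 / 4)) := by
  set μ := Measure.pi fun _ : Fin d ↦ gaussianReal 0 1
  set r : (Fin d → ℝ) → ℝ := fun x ↦ √(∑ i, x i ^ 2)
  have hupper := measureReal_sqrt_sum_sq_gt_le (ι := Fin d) (by rw [Fintype.card_fin]; omega) hc.le
  have hlower := measureReal_sqrt_sum_sq_lt_le (ι := Fin d) hc.le
  rw [Fintype.card_fin] at hupper hlower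
  have hsub : {x | ¬ (√(d - 1) - c ≤ r x ∧ r x ≤ √(d - 1) + c)}
      ⊆ {x | √(d - 1) + c < r x} ∪ {x | r x < √d - c} := by
    intro x hx
    rw [Set.mem_ofPred_eq, not_and_or, not_le, not_le] at hx
    have : √((d : ℝ) - 1) ≤ √d := sqrt_le_sqrt (by linarith)
    exact hx.symm.imp id fun h ↦ by rw [Set.mem_ofPred_eq]; linarith
  have hd1 : 1 / ((d : ℝ) - 1) ≤ 1 := by
    have : (2 : ℝ) ≤ d := by exact_mod_cast hd
    rw [div_le_one (by linarith)]
    linarith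
  calc μ _ ≤ μ ({x | √(d - 1) + c < r x} ∪ {x | r x < √d - c}) := measure_mono hsub
    _ ≤ μ {x | √(d - 1) + c < r x} + μ {x | r x < √d - c} := measure_union_le _ _
    _ = ENNReal.ofReal (μ.real {x | √(d - 1) + c < r x} + μ.real {x | r x < √d - c}) := by
      rw [ENNReal.ofReal_add measureReal_nonneg measureReal_nonneg, ofReal_measureReal,
        ofReal_measureReal]
    _ ≤ ENNReal.ofReal ((1 + exp (1 / 2)) * exp (-c ^ 2 / 2)) := by
      refine ENNReal.ofReal_le_ofReal ?_
      calc _ ≤ exp ((1 - c ^ 2) / 2) + exp (-c ^ 2 / 2) :=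
            add_le_add (hupper.trans (exp_le_exp.2 (by linarith))) hlower
        _ = (1 + exp (1 / 2)) * exp (-c ^ 2 / 2) := by rw [add_mul, one_mul, ← exp_add]; ring_nf
    _ ≤ _ := ENNReal.ofReal_le_ofReal (one_add_exp_half_mul_exp_le hc.ne')
end
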